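/- Assume Δ is irreducible with roots of two different lengths. Let Δ_l ⊆ Δ be the set of long roots (the roots of maximal length), which is itself a root system; let W(Δ_l) ≤ W be the subgroup generated by the reflections s_β for β ∈ Δ_l, and let W_s ≤ W be the subgroup generated by the reflections s_α for the short simple roots α ∈ Π. Then W(Δ_l) is normal in W, W_s ∩ W(Δ_l) = {1}, and W = W_s · W(Δ_l); that is, W is the internal semidirect product W_s ⋉ W(Δ_l). -/

import Mathlib

open scoped RealInnerProductSpace

/-- A finite reduced crystallographic root system spanning a real inner
product space `V` (whose inner product is automatically invariant under the
Weyl group, since the reflections are isometries), together with a fixed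
system of positive roots and the corresponding simple roots. -/
structure RootSystemData (V : Type)
    [NormedAddCommGroup V] [InnerProductSpace ℝ V] : Type where
  roots : Finset V
  pos : Finset V
  simples : Finset V
  zero_not_mem : (0 : V) ∉ roots
  span_roots : Submodule.span ℝ (roots : Set V) = ⊤
  crystallographic : ∀ α ∈ roots, ∀ β ∈ roots,
    ∃ n : ℤ, 2 * ⟪α, β⟫ = (n : ℝ) * ⟪β, β⟫
  reduced : ∀ α ∈ roots, ∀ t : ℝ, t • α ∈ roots → t = 1 ∨ t = -1
  reflect_mem : ∀ α ∈ roots, ∀ β ∈ roots,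
    β - (2 * ⟪β, α⟫ / ⟪α, α⟫) • α ∈ roots
  pos_subset : pos ⊆ roots
  mem_pos_or_neg_mem_pos : ∀ α ∈ roots, α ∈ pos ∨ -α ∈ pos
  neg_not_pos : ∀ α ∈ pos, -α ∉ pos
  simples_subset : simples ⊆ pos
  simples_linearIndependent : LinearIndependent ℝ (fun α : simples => (α : V))
  pos_sum_of_simples : ∀ β ∈ pos, ∃ c : V →₀ ℕ,
    (c.support : Set V) ⊆ (simples : Set V) ∧ β = c.sum fun α n => (n : ℝ) • α

namespace RootSystemData

variable {V : Type} [NormedAddCommGroup V] [InnerProductSpace ℝ V]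
variable (R : RootSystemData V)

/-- `β₁ > β₂` : the difference `β₁ - β₂` is a nonempty sum of positive roots. -/
def Gt (x y : V) : Prop :=
  ∃ m : Multiset V, m ≠ 0 ∧ (∀ z ∈ m, z ∈ R.pos) ∧ x - y = m.sum

/-- `β₁ ≥ β₂` : either `β₁ > β₂` or `β₁ = β₂`. -/
def Ge (x y : V) : Prop := R.Gt x y ∨ x = y

/-- An antichain: a set of pairwise incomparable positive roots. -/
def IsRootAntichain (A : Set V) : Prop :=
  A ⊆ (R.pos : Set V) ∧ ∀ x ∈ A, ∀ y ∈ A, x ≠ y → ¬ R.Ge x y ∧ ¬ R.Ge y x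

/-- An orthogonal antichain: an antichain of pairwise orthogonal positive roots. -/
def IsOrthAntichain (A : Set V) : Prop :=
  R.IsRootAntichain A ∧ ∀ x ∈ A, ∀ y ∈ A, x ≠ y → ⟪x, y⟫ = 0

/-- The complement, inside the open dominant Weyl chamber, of the hyperplane
arrangement `⟨β,·⟩ = 1`, `β ∈ Δ⁺`. -/
def chamberSet : Set V :=
  {χ | (∀ α ∈ R.simples, 0 < ⟪α, χ⟫) ∧ ∀ β ∈ R.pos, ⟪β, χ⟫ ≠ 1}

/-- A region: a connected component of `chamberSet`. -/
def IsRegion (F : Set V) : Prop :=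
  ∃ χ ∈ R.chamberSet, F = connectedComponentIn R.chamberSet χ

/-- The positive roots `β` with `⟨β,·⟩ < 1` on `F`. -/
def ltOne (F : Set V) : Set V := {β | β ∈ R.pos ∧ ∀ χ ∈ F, ⟪β, χ⟫ < 1}

/-- The positive roots `β` with `⟨β,·⟩ > 1` on `F`. -/
def gtOne (F : Set V) : Set V := {β | β ∈ R.pos ∧ ∀ χ ∈ F, 1 < ⟪β, χ⟫}

/-- `δ(F)`: the maximal roots among the positive roots `β` with `⟨β,·⟩ < 1` on `F`. -/
def deltaLow (F : Set V) : Set V :=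
  {β | β ∈ R.ltOne F ∧ ∀ β' ∈ R.ltOne F, ¬ R.Gt β' β}

/-- `δ'(F)`: the minimal roots among the positive roots `β` with `⟨β,·⟩ > 1` on `F`. -/
def deltaHigh (F : Set V) : Set V :=
  {β | β ∈ R.gtOne F ∧ ∀ β' ∈ R.gtOne F, ¬ R.Gt β β'}

/-- Simply laced: all roots have the same length, normalized so `⟨β,β⟩ = 2`. -/
def SimplyLaced : Prop := ∀ β ∈ R.roots, ⟪β, β⟫ = 2

/-- Irreducibility: the set of roots admits no nontrivial partition into two
mutually orthogonal parts. -/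
def IsIrreducible : Prop :=
  ∀ S : Set V, S ⊆ (R.roots : Set V) →
    (∀ a ∈ S, ∀ b ∈ (R.roots : Set V) \ S, ⟪a, b⟫ = 0) →
    S = ∅ ∨ S = (R.roots : Set V)

/-- The height of a positive root: the sum of its (unique) coordinates in the
simple roots. -/
noncomputable def height (β : V) : ℕ :=
  letI := Classical.propDecidable (∃ c : V →₀ ℕ, (c.support : Set V) ⊆ (R.simples : Set V) ∧
      β = c.sum (fun α n => (n : ℝ) • α))
  if h : ∃ c : V →₀ ℕ, (c.support : Set V) ⊆ (R.simples : Set V) ∧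
      β = c.sum (fun α n => (n : ℝ) • α)
  then (Classical.choose h).sum fun _ n => n
  else 0

/-- The root system has the Cartan–Killing type given by the (simply laced)
Cartan matrix `A`: there is an indexing of the simple roots under which, in the
normalization `⟨β,β⟩ = 2`, the inner products of simple roots are the entries
of `A`. -/
def HasType {n : ℕ} (A : Matrix (Fin n) (Fin n) ℤ) : Prop :=
  ∃ e : Fin n ≃ {x // x ∈ R.simples},
    ∀ i j, ⟪((e i : V)), ((e j : V))⟫ = (A i j : ℝ)

/-- The reflections `s_β`, `β ∈ S`, as linear isometries of `V`. -/
def reflectionsOn (S : Set V) : Set (V ≃ₗᵢ[ℝ] V) :=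
  {g | ∃ β ∈ S, ∀ v, g v = v - (2 * ⟪v, β⟫ / ⟪β, β⟫) • β}

/-- The Weyl group `W`, generated by the reflections in all roots. -/
def weyl : Subgroup (V ≃ₗᵢ[ℝ] V) :=
  Subgroup.closure (reflectionsOn (R.roots : Set V))

/-- `Δ_S = Δ ∩ span_ℝ(S)`. -/
def rootsIn (S : Set V) : Set V :=
  {β | β ∈ R.roots ∧ β ∈ Submodule.span ℝ S}

/-- `Δ_S⁺ = Δ⁺ ∩ span_ℝ(S)`. -/
def posIn (S : Set V) : Set V :=
  {β | β ∈ R.pos ∧ β ∈ Submodule.span ℝ S}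

/-- The inversion set `N(w) = {β ∈ Δ⁺ : w(β) ∈ -Δ⁺}`. -/
def inversionSet (w : V ≃ₗᵢ[ℝ] V) : Set V :=
  {β | β ∈ R.pos ∧ -(w β) ∈ R.pos}

end RootSystemData

/-- The subgroup of isometries generated by the reflections `s_β`, `β ∈ S`. -/
def reflectionSubgroup {V : Type} [NormedAddCommGroup V] [InnerProductSpace ℝ V]
    (S : Set V) : Subgroup (V ≃ₗᵢ[ℝ] V) :=
  Subgroup.closure (RootSystemData.reflectionsOn S)

/-- The long roots: the roots of maximal length. -/
def longRoots {V : Type} [NormedAddCommGroup V] [InnerProductSpace ℝ V]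
    (R : RootSystemData V) : Set V :=
  {β | β ∈ R.roots ∧ ∀ γ ∈ R.roots, ‖γ‖ ≤ ‖β‖}

/-- The short simple roots: the simple roots which are not long. -/
def shortSimples {V : Type} [NormedAddCommGroup V] [InnerProductSpace ℝ V]
    (R : RootSystemData V) : Set V :=
  {α | α ∈ R.simples ∧ (α : V) ∉ longRoots R}
/-!
Conjugation gives `w s_β w⁻¹ = s_{w β}` and `W` preserves root lengths, so `W(Δ_l)` is normal
in `W`. The simple reflections generate `W`, and each of them lies in `W_s` or in `W(Δ_l)`;
hence `W = W_s · W(Δ_l)`. A reflection in a short simple root `α` permutes the positive roots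
other than `α`, so `W_s` preserves the positive long roots. As `Δ_l` is itself a root system,
its Weyl group acts freely on its positive systems, and therefore `W_s ∩ W(Δ_l) = 1`.
-/

open RootSystemData Set

variable {V : Type} [NormedAddCommGroup V] [InnerProductSpace ℝ V]

lemma inner_sub_reflection_self (β v : V) :
    ⟪v - (2 * ⟪v, β⟫ / ⟪β, β⟫) • β, β⟫ = -⟪v, β⟫ := by
  rcases eq_or_ne β 0 with rfl | hβ
  · simp
  · have := (real_inner_self_pos.mpr hβ).ne'
    rw [inner_sub_left, real_inner_smul_left]
    field_simp
    ring

lemma sub_reflection_involutive (β v : V) :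
    (v - (2 * ⟪v, β⟫ / ⟪β, β⟫) • β)
      - (2 * ⟪v - (2 * ⟪v, β⟫ / ⟪β, β⟫) • β, β⟫ / ⟪β, β⟫) • β = v := by
  rw [inner_sub_reflection_self]
  module

lemma inner_sub_reflection_sub_reflection (β v : V) :
    ⟪v - (2 * ⟪v, β⟫ / ⟪β, β⟫) • β, v - (2 * ⟪v, β⟫ / ⟪β, β⟫) • β⟫ = ⟪v, v⟫ := by
  rw [inner_sub_right _ v, real_inner_smul_right, inner_sub_reflection_self, inner_sub_left,
    real_inner_smul_left, real_inner_comm β v]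
  ring

/-- At `β = 0` the formula gives the identity, since `0 / 0 = 0`. -/
noncomputable def rootReflection (β : V) : V ≃ₗᵢ[ℝ] V where
  toFun v := v - (2 * ⟪v, β⟫ / ⟪β, β⟫) • β
  invFun v := v - (2 * ⟪v, β⟫ / ⟪β, β⟫) • β
  map_add' x y := by
    simp only [inner_add_left, mul_add, add_div, add_smul]
    abel
  map_smul' t x := by
    rw [real_inner_smul_left, RingHom.id_apply, smul_sub, smul_smul]
    congr 2
    ring
  left_inv := sub_reflection_involutive β
  right_inv := sub_reflection_involutive β
  norm_map' v := by
    rw [norm_eq_sqrt_real_inner, norm_eq_sqrt_real_inner]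
    exact congrArg _ (inner_sub_reflection_sub_reflection β v)

lemma rootReflection_apply (β v : V) :
    rootReflection β v = v - (2 * ⟪v, β⟫ / ⟪β, β⟫) • β := rfl

@[simp]
lemma rootReflection_self (β : V) : rootReflection β β = -β := by
  rcases eq_or_ne β 0 with rfl | hβ
  · simp [rootReflection_apply]
  · rw [rootReflection_apply, mul_div_assoc, div_self (real_inner_self_pos.mpr hβ).ne']
    module

@[simp]
lemma rootReflection_rootReflection (β v : V) : rootReflection β (rootReflection β v) = v :=
  sub_reflection_involutive β v

lemma rootReflection_mul_self (β : V) : rootReflection β * rootReflection β = 1 :=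
  LinearIsometryEquiv.ext (rootReflection_rootReflection β)

lemma rootReflection_inv (β : V) : (rootReflection β)⁻¹ = rootReflection β :=
  inv_eq_of_mul_eq_one_left (rootReflection_mul_self β)

lemma rootReflection_neg (β : V) : rootReflection (-β) = rootReflection β := by
  ext v
  rw [rootReflection_apply, rootReflection_apply, inner_neg_neg, inner_neg_right]
  module

lemma rootReflection_sub (β v : V) :
    rootReflection β (v - β) = rootReflection β v + β := by
  rw [map_sub, rootReflection_self, sub_neg_eq_add]

lemma mul_rootReflection_mul_inv (w : V ≃ₗᵢ[ℝ] V) (β : V) :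
    w * rootReflection β * w⁻¹ = rootReflection (w β) := by
  ext v
  have hv : ⟪w⁻¹ v, β⟫ = ⟪v, w β⟫ := by
    rw [← w.inner_map_map]
    exact congrArg (⟪·, w β⟫) (w.apply_symm_apply v)
  change w (rootReflection β (w⁻¹ v)) = _
  rw [rootReflection_apply, rootReflection_apply, map_sub, map_smul, hv, w.inner_map_map]
  exact congrArg (· - _) (w.apply_symm_apply v)

lemma mem_reflectionsOn_iff {U : Set V} {g : V ≃ₗᵢ[ℝ] V} :
    g ∈ reflectionsOn U ↔ ∃ β ∈ U, g = rootReflection β := by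
  simp only [reflectionsOn, mem_ofPred_eq, LinearIsometryEquiv.ext_iff, rootReflection_apply]

lemma rootReflection_mem_reflectionSubgroup {U : Set V} {β : V} (hβ : β ∈ U) :
    rootReflection β ∈ reflectionSubgroup U :=
  Subgroup.subset_closure (mem_reflectionsOn_iff.mpr ⟨β, hβ, rfl⟩)

lemma reflectionSubgroup_mono {U U' : Set V} (h : U ⊆ U') :
    reflectionSubgroup U ≤ reflectionSubgroup U' :=
  Subgroup.closure_mono fun _ ⟨β, hβ, hg⟩ => ⟨β, h hβ, hg⟩

lemma reflectionSubgroup_le {U : Set V} {H : Subgroup (V ≃ₗᵢ[ℝ] V)}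
    (h : ∀ β ∈ U, rootReflection β ∈ H) : reflectionSubgroup U ≤ H := by
  rw [reflectionSubgroup, Subgroup.closure_le]
  rintro _ hg
  obtain ⟨β, hβ, rfl⟩ := mem_reflectionsOn_iff.mp hg
  exact h β hβ

lemma mapsTo_of_mem_reflectionSubgroup {U S : Set V}
    (hS : ∀ β ∈ U, MapsTo (rootReflection β) S S) {w : V ≃ₗᵢ[ℝ] V}
    (hw : w ∈ reflectionSubgroup U) : MapsTo w S S := by
  induction hw using Subgroup.closure_induction'' with
  | mem g hg =>
    obtain ⟨β, hβ, rfl⟩ := mem_reflectionsOn_iff.mp hg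
    exact hS β hβ
  | inv_mem g hg =>
    obtain ⟨β, hβ, rfl⟩ := mem_reflectionsOn_iff.mp hg
    rw [rootReflection_inv]
    exact hS β hβ
  | one => exact mapsTo_id S
  | mul x y _ _ hx hy => exact hx.comp hy

lemma conj_mem_reflectionSubgroup {U : Set V} {w : V ≃ₗᵢ[ℝ] V} (hw : MapsTo w U U)
    {u : V ≃ₗᵢ[ℝ] V} (hu : u ∈ reflectionSubgroup U) :
    w * u * w⁻¹ ∈ reflectionSubgroup U := by
  have : reflectionSubgroup U ≤ (reflectionSubgroup U).comap (MulAut.conj w).toMonoidHom :=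
    reflectionSubgroup_le fun β hβ => by
      simpa [mul_rootReflection_mul_inv] using rootReflection_mem_reflectionSubgroup (hw hβ)
  simpa using this hu

lemma mem_normalizer_reflectionSubgroup {U : Set V} {w : V ≃ₗᵢ[ℝ] V} (hw : MapsTo w U U)
    (hw' : MapsTo ⇑(w⁻¹) U U) :
    w ∈ Subgroup.normalizer (reflectionSubgroup U : Set (V ≃ₗᵢ[ℝ] V)) := by
  refine Subgroup.mem_normalizer_iff.mpr fun u => ⟨conj_mem_reflectionSubgroup hw, fun hu => ?_⟩
  simpa [mul_assoc] using conj_mem_reflectionSubgroup hw' hu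

lemma exists_list_of_mem_reflectionSubgroup {U : Set V} {w : V ≃ₗᵢ[ℝ] V}
    (hw : w ∈ reflectionSubgroup U) :
    ∃ l : List (V ≃ₗᵢ[ℝ] V), (∀ g ∈ l, g ∈ reflectionsOn U) ∧ l.prod = w := by
  have hinv : (reflectionsOn U)⁻¹ = reflectionsOn U := by
    ext g
    simp_rw [mem_inv, mem_reflectionsOn_iff, inv_eq_iff_eq_inv, rootReflection_inv]
  rw [← Subgroup.mem_toSubmonoid, reflectionSubgroup, Subgroup.closure_toSubmonoid, hinv,
    union_self] at hw
  exact Submonoid.exists_list_of_mem_closure hw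

/-- A finite, reduced, crystallographic set of vectors closed under its own reflections, with a
linear form `form` that vanishes on none of them and so selects the positive roots. Unlike
`RootSystemData` it does not come with simple roots, so it also covers `Δ_l`. -/
structure RootSet (V : Type) [NormedAddCommGroup V] [InnerProductSpace ℝ V] where
  roots : Set V
  form : V →ₗ[ℝ] ℝ
  finite : roots.Finite
  zero_notMem : (0 : V) ∉ roots
  rootReflection_mem : ∀ β ∈ roots, ∀ γ ∈ roots, rootReflection β γ ∈ roots
  reduced : ∀ β ∈ roots, ∀ t : ℝ, t • β ∈ roots → t = 1 ∨ t = -1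
  crystallographic : ∀ β ∈ roots, ∀ γ ∈ roots, ∃ n : ℤ, 2 * ⟪β, γ⟫ = n * ⟪γ, γ⟫
  form_ne_zero : ∀ β ∈ roots, form β ≠ 0

namespace RootSet

variable (Φ : RootSet V)

def pos : Set V := {β | β ∈ Φ.roots ∧ 0 < Φ.form β}

def simple : Set V := {α | α ∈ Φ.pos ∧ ∀ β ∈ Φ.pos, ∀ γ ∈ Φ.pos, α ≠ β + γ}

variable {Φ}

lemma ne_zero {β : V} (hβ : β ∈ Φ.roots) : β ≠ 0 :=
  fun h => Φ.zero_notMem (h ▸ hβ)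

lemma neg_mem {β : V} (hβ : β ∈ Φ.roots) : -β ∈ Φ.roots := by
  simpa using Φ.rootReflection_mem β hβ β hβ

lemma neg_mem_pos_of_notMem_pos {β : V} (hβ : β ∈ Φ.roots) (h : β ∉ Φ.pos) : -β ∈ Φ.pos :=
  ⟨neg_mem hβ, by
    rw [map_neg, neg_pos]
    exact (not_lt.mp fun h' => h ⟨hβ, h'⟩).lt_of_ne (Φ.form_ne_zero β hβ)⟩

lemma neg_notMem_pos {β : V} (hβ : β ∈ Φ.pos) : -β ∉ Φ.pos :=
  fun h => by linarith [hβ.2, h.2, Φ.form.map_neg β]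

@[elab_as_elim]
lemma pos_induction {p : V → Prop} {β : V} (hβ : β ∈ Φ.pos)
    (h : ∀ β ∈ Φ.pos, (∀ γ ∈ Φ.pos, Φ.form γ < Φ.form β → p γ) → p β) : p β := by
  induction hn : {γ ∈ Φ.roots | Φ.form γ < Φ.form β}.ncard using Nat.strong_induction_on
    generalizing β with
  | _ n ih =>
    refine h β hβ fun γ hγ hlt => ih _ ?_ hγ rfl
    rw [← hn]
    have hsub : {δ ∈ Φ.roots | Φ.form δ < Φ.form γ} ⊆ {δ ∈ Φ.roots | Φ.form δ < Φ.form β} :=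
      fun δ hδ => ⟨hδ.1, hδ.2.trans hlt⟩
    exact ncard_lt_ncard ((ssubset_iff_of_subset hsub).mpr ⟨γ, ⟨hγ.1, hlt⟩, fun h => h.2.false⟩)
      (Φ.finite.subset fun δ hδ => hδ.1)

lemma inner_lt_norm_mul_norm {β γ : V} (hβ : β ∈ Φ.roots) (hγ : γ ∈ Φ.roots) (hne : β ≠ γ) :
    ⟪β, γ⟫ < ‖β‖ * ‖γ‖ := by
  refine (real_inner_le_norm β γ).lt_of_ne fun h => hne ?_
  have hγ0 : ‖γ‖ ≠ 0 := norm_ne_zero_iff.mpr (ne_zero hγ)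
  have hβt : β = (‖β‖ / ‖γ‖) • γ := by
    rw [div_eq_inv_mul, mul_smul, eq_inv_smul_iff₀ hγ0]
    exact inner_eq_norm_mul_iff_real.mp h
  rcases Φ.reduced γ hγ _ (hβt ▸ hβ) with h1 | h1
  · rw [hβt, h1, one_smul]
  · have : 0 ≤ ‖β‖ / ‖γ‖ := by positivity
    linarith

/-- The Cartan integers `n, m ≥ 1` satisfy `n * m < 4` by strict Cauchy–Schwarz, so one of
them is `1`, and then `s_γ β = β - γ` or `s_β γ = γ - β`. -/
lemma sub_mem_of_inner_pos {β γ : V} (hβ : β ∈ Φ.roots) (hγ : γ ∈ Φ.roots) (hne : β ≠ γ)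
    (hpos : 0 < ⟪β, γ⟫) : β - γ ∈ Φ.roots := by
  obtain ⟨n, hn⟩ := Φ.crystallographic β hβ γ hγ
  obtain ⟨m, hm⟩ := Φ.crystallographic γ hγ β hβ
  rw [real_inner_comm] at hm
  have hγγ := real_inner_self_pos.mpr (ne_zero hγ)
  have hββ := real_inner_self_pos.mpr (ne_zero hβ)
  have hn0 : 0 < n := by
    have : (0 : ℝ) < n * ⟪γ, γ⟫ := by linarith
    exact_mod_cast pos_of_mul_pos_left this hγγ.le
  have hm0 : 0 < m := by
    have : (0 : ℝ) < m * ⟪β, β⟫ := by linarith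
    exact_mod_cast pos_of_mul_pos_left this hββ.le
  have hcs : ⟪β, γ⟫ ^ 2 < ⟪β, β⟫ * ⟪γ, γ⟫ := by
    rw [real_inner_self_eq_norm_sq, real_inner_self_eq_norm_sq, ← mul_pow]
    exact pow_lt_pow_left₀ (inner_lt_norm_mul_norm hβ hγ hne) hpos.le two_ne_zero
  have hnm : n * m < 4 := by
    have : (n : ℝ) * m * (⟪γ, γ⟫ * ⟪β, β⟫) = 4 * ⟪β, γ⟫ ^ 2 := by
      linear_combination -(m * ⟪β, β⟫) * hn - 2 * ⟪β, γ⟫ * hm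
    exact_mod_cast (show (n : ℝ) * m < 4 by nlinarith [mul_pos hγγ hββ])
  have hnm1 : n = 1 ∨ m = 1 := by
    by_contra! h
    nlinarith [show 2 ≤ n by omega, show 2 ≤ m by omega]
  rcases hnm1 with rfl | rfl
  · have := Φ.rootReflection_mem γ hγ β hβ
    rwa [rootReflection_apply, hn, Int.cast_one, one_mul, div_self hγγ.ne', one_smul] at this
  · have := neg_mem (Φ.rootReflection_mem β hβ γ hγ)
    rwa [rootReflection_apply, real_inner_comm, hm, Int.cast_one, one_mul,
      div_self hββ.ne', one_smul, neg_sub] at this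

lemma exists_simple_inner_pos {β : V} (hβ : β ∈ Φ.pos) {v : V} (hv : 0 < ⟪v, β⟫) :
    ∃ α ∈ Φ.simple, 0 < ⟪v, α⟫ := by
  revert hv
  refine pos_induction hβ fun β hβ ih hv => ?_
  by_cases hs : β ∈ Φ.simple
  · exact ⟨β, hs, hv⟩
  obtain ⟨β₁, hβ₁, β₂, hβ₂, rfl⟩ : ∃ β₁ ∈ Φ.pos, ∃ β₂ ∈ Φ.pos, β = β₁ + β₂ := by
    by_contra! h
    exact hs ⟨hβ, h⟩
  rw [inner_add_right] at hv
  rw [map_add] at ih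
  rcases lt_or_ge 0 ⟪v, β₁⟫ with h₁ | h₁
  · exact ih β₁ hβ₁ (by linarith [hβ₂.2]) h₁
  · exact ih β₂ hβ₂ (by linarith [hβ₁.2]) (by linarith)

lemma form_rootReflection (β γ : V) :
    Φ.form (rootReflection γ β) = Φ.form β - 2 * ⟪β, γ⟫ / ⟪γ, γ⟫ * Φ.form γ := by
  rw [rootReflection_apply, map_sub, map_smul, smul_eq_mul]

lemma inner_nonpos_of_simple {α α' : V} (hα : α ∈ Φ.simple) (hα' : α' ∈ Φ.simple)
    (hne : α ≠ α') : ⟪α, α'⟫ ≤ 0 := by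
  by_contra! h
  have hδ := sub_mem_of_inner_pos hα.1.1 hα'.1.1 hne h
  by_cases hδ' : α - α' ∈ Φ.pos
  · exact hα.2 α' hα'.1 _ hδ' (by abel)
  · exact hα'.2 α hα.1 _ (neg_mem_pos_of_notMem_pos hδ hδ') (by abel)

/-- If `s_α β` were negative, then `β - α` would be a root, and either `α = β + (α - β)` or, by
induction on `β`, `α = s_α (β - α) + (-s_α β)` would decompose `α`. -/
lemma rootReflection_mem_pos {α β : V} (hα : α ∈ Φ.simple) (hβ : β ∈ Φ.pos) (hne : β ≠ α) :
    rootReflection α β ∈ Φ.pos := by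
  revert hne
  refine pos_induction hβ fun β hβ ih hne => ?_
  by_contra hneg
  have hsβ := neg_mem_pos_of_notMem_pos (Φ.rootReflection_mem α hα.1.1 β hβ.1) hneg
  have hinner : 0 < ⟪β, α⟫ := by
    by_contra! h
    have hc : 2 * ⟪β, α⟫ / ⟪α, α⟫ ≤ 0 :=
      div_nonpos_of_nonpos_of_nonneg (by linarith) real_inner_self_nonneg
    have := hsβ.2
    rw [map_neg, form_rootReflection] at this
    nlinarith [hα.1.2, hβ.2]
  have hδ := sub_mem_of_inner_pos hβ.1 hα.1.1 hne hinner
  by_cases hδpos : β - α ∈ Φ.pos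
  · have hδα : β - α ≠ α := fun h => by
      have h2 : β = (2 : ℝ) • α := (sub_eq_iff_eq_add.mp h).trans (two_smul ℝ α).symm
      rcases Φ.reduced α hα.1.1 2 (h2 ▸ hβ.1) with h | h <;> norm_num at h
    have hsδ := ih _ hδpos (by rw [map_sub]; linarith [hα.1.2]) hδα
    rw [rootReflection_sub] at hsδ
    exact hα.2 _ hsδ _ hsβ (by abel)
  · exact hα.2 β hβ _ (neg_mem_pos_of_notMem_pos hδ hδpos) (by abel)

lemma exists_eq_apply_simple {β : V} (hβ : β ∈ Φ.pos) :
    ∃ w ∈ reflectionSubgroup Φ.simple, ∃ α ∈ Φ.simple, β = w α := by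
  refine pos_induction hβ fun β hβ ih => ?_
  by_cases hs : β ∈ Φ.simple
  · exact ⟨1, one_mem _, β, hs, rfl⟩
  obtain ⟨γ, hγ, hβγ⟩ := exists_simple_inner_pos hβ (real_inner_self_pos.mpr (ne_zero hβ.1))
  have hlt : Φ.form (rootReflection γ β) < Φ.form β := by
    rw [form_rootReflection]
    have := div_pos (mul_pos two_pos hβγ) (real_inner_self_pos.mpr (ne_zero hγ.1.1))
    nlinarith [hγ.1.2]
  obtain ⟨w, hw, α, hα, hwα⟩ :=
    ih _ (rootReflection_mem_pos hγ hβ fun h => hs (h ▸ hγ)) hlt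
  refine ⟨rootReflection γ * w, mul_mem (rootReflection_mem_reflectionSubgroup hγ) hw, α, hα, ?_⟩
  rw [LinearIsometryEquiv.coe_mul, Function.comp_apply, ← hwα, rootReflection_rootReflection]

lemma reflectionSubgroup_simple : reflectionSubgroup Φ.simple = reflectionSubgroup Φ.roots := by
  have hpos : ∀ β ∈ Φ.pos, rootReflection β ∈ reflectionSubgroup Φ.simple := fun β hβ => by
    obtain ⟨w, hw, α, hα, rfl⟩ := exists_eq_apply_simple hβ
    rw [← mul_rootReflection_mul_inv]
    exact mul_mem (mul_mem hw (rootReflection_mem_reflectionSubgroup hα)) (inv_mem hw)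
  refine le_antisymm (reflectionSubgroup_mono fun α hα => hα.1.1) (reflectionSubgroup_le ?_)
  intro β hβ
  by_cases h : β ∈ Φ.pos
  · exact hpos β h
  · rw [← rootReflection_neg]
    exact hpos _ (neg_mem_pos_of_notMem_pos hβ h)

/-- The deletion condition. Some letter `s_γ` sends the image of `α` under the letters after it,
a positive root, to a negative one; that image is then `γ`, so `s_γ` equals their product
conjugated to `s_α`. -/
lemma exists_shorter_prod_eq_mul_rootReflection {l : List (V ≃ₗᵢ[ℝ] V)}
    (hl : ∀ g ∈ l, g ∈ reflectionsOn Φ.simple) {α : V} (hα : α ∈ Φ.simple) (h : -(l.prod α) ∈ Φ.pos) :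
    ∃ l' : List (V ≃ₗᵢ[ℝ] V), (∀ g ∈ l', g ∈ reflectionsOn Φ.simple) ∧
      l'.length < l.length ∧ l'.prod = l.prod * rootReflection α := by
  induction l with
  | nil => exact absurd h (by simpa using neg_notMem_pos hα.1)
  | cons g l ih =>
    obtain ⟨γ, hγ, rfl⟩ := mem_reflectionsOn_iff.mp (hl g List.mem_cons_self)
    have hl' : ∀ g ∈ l, g ∈ reflectionsOn Φ.simple := fun g hg => hl g (List.mem_cons_of_mem _ hg)
    rw [List.prod_cons, LinearIsometryEquiv.coe_mul, Function.comp_apply] at h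
    by_cases hx : l.prod α ∈ Φ.pos
    · have hxγ : l.prod α = γ := by
        by_contra hne
        exact neg_notMem_pos (rootReflection_mem_pos hγ hx hne) h
      refine ⟨l, hl', by simp, ?_⟩
      rw [List.prod_cons, ← hxγ, ← mul_rootReflection_mul_inv, inv_mul_cancel_right, mul_assoc,
        rootReflection_mul_self, mul_one]
    · have hmaps : MapsTo l.prod Φ.roots Φ.roots :=
        mapsTo_of_mem_reflectionSubgroup (fun β hβ => Φ.rootReflection_mem β hβ.1.1)
          (Subgroup.list_prod_mem _ fun g hg => Subgroup.subset_closure (hl' g hg))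
      obtain ⟨l', hl'', hlen, hprod⟩ := ih hl' (neg_mem_pos_of_notMem_pos (hmaps hα.1.1) hx)
      refine ⟨rootReflection γ :: l', ?_, by simpa using hlen, ?_⟩
      · exact List.forall_mem_cons.mpr ⟨hl _ List.mem_cons_self, hl''⟩
      · rw [List.prod_cons, List.prod_cons, hprod, mul_assoc]

/-- The last letter `s_α` of a word in simple reflections for `w` sends `α` to `-w α`, a negative
root, so the deletion condition shortens the word. -/
lemma eq_one_of_mapsTo_pos {w : V ≃ₗᵢ[ℝ] V} (hw : w ∈ reflectionSubgroup Φ.roots)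
    (hpos : MapsTo w Φ.pos Φ.pos) : w = 1 := by
  rw [← reflectionSubgroup_simple] at hw
  obtain ⟨l, hl, rfl⟩ := exists_list_of_mem_reflectionSubgroup hw
  clear hw
  induction hn : l.length using Nat.strong_induction_on generalizing l with
  | _ n ih =>
  rcases l.eq_nil_or_concat' with rfl | ⟨l₀, g, rfl⟩
  · rfl
  obtain ⟨α, hα, rfl⟩ := mem_reflectionsOn_iff.mp (hl g (by simp))
  have hl₀ : ∀ g ∈ l₀, g ∈ reflectionsOn Φ.simple := fun g hg => hl g (by simp [hg])
  rw [List.prod_append, List.prod_singleton] at hpos ⊢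
  have hneg : -(l₀.prod α) ∈ Φ.pos := by
    simpa using hpos hα.1
  obtain ⟨l', hl', hlen, hprod⟩ := exists_shorter_prod_eq_mul_rootReflection hl₀ hα hneg
  rw [← hprod] at hpos ⊢
  exact ih _ (by simp at hn; omega) l' hl' hpos rfl

def restrict (S : Set V) (hS : S ⊆ Φ.roots)
    (hrefl : ∀ β ∈ S, ∀ γ ∈ S, rootReflection β γ ∈ S) : RootSet V where
  roots := S
  form := Φ.form
  finite := Φ.finite.subset hS
  zero_notMem h := Φ.zero_notMem (hS h)
  rootReflection_mem := hrefl
  reduced β hβ t ht := Φ.reduced β (hS hβ) t (hS ht)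
  crystallographic β hβ γ hγ := Φ.crystallographic β (hS hβ) γ (hS hγ)
  form_ne_zero β hβ := Φ.form_ne_zero β (hS hβ)

lemma restrict_pos (S : Set V) (hS : S ⊆ Φ.roots)
    (hrefl : ∀ β ∈ S, ∀ γ ∈ S, rootReflection β γ ∈ S) :
    (Φ.restrict S hS hrefl).pos = S ∩ Φ.pos :=
  ext fun _ => ⟨fun h => ⟨h.1, hS h.1, h.2⟩, fun h => ⟨h.1, h.2.2⟩⟩

end RootSet

lemma LinearIndependent.exists_linearMap_eq_one {K M ι : Type*} [Field K] [AddCommGroup M]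
    [Module K M] {v : ι → M} (hv : LinearIndependent K v) :
    ∃ f : M →ₗ[K] K, ∀ i, f (v i) = 1 := by
  obtain ⟨g, hg⟩ := LinearMap.exists_leftInverse_of_injective _ (LinearMap.ker_eq_bot.mpr hv)
  refine ⟨Finsupp.linearCombination K (fun _ => (1 : K)) ∘ₗ g, fun i => ?_⟩
  have hgi : g (v i) = Finsupp.single i 1 := by
    simpa using LinearMap.congr_fun hg (Finsupp.single i 1)
  simp [hgi]

namespace RootSystemData

variable (R : RootSystemData V)

noncomputable def heightForm : V →ₗ[ℝ] ℝ :=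
  R.simples_linearIndependent.exists_linearMap_eq_one.choose

variable {R}

lemma heightForm_simple {α : V} (hα : α ∈ R.simples) : R.heightForm α = 1 :=
  R.simples_linearIndependent.exists_linearMap_eq_one.choose_spec ⟨α, hα⟩

lemma one_le_heightForm {β : V} (hβ : β ∈ R.pos) : 1 ≤ R.heightForm β := by
  obtain ⟨c, hc, rfl⟩ := R.pos_sum_of_simples β hβ
  have hc0 : c ≠ 0 := by
    rintro rfl
    exact R.zero_not_mem (by simpa using R.pos_subset hβ)
  obtain ⟨a, ha⟩ := Finsupp.support_nonempty_iff.mpr hc0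
  have hterm : ∀ x ∈ c.support, R.heightForm ((c x : ℝ) • x) = c x := fun x hx => by
    rw [map_smul, heightForm_simple (hc hx), smul_eq_mul, mul_one]
  rw [Finsupp.sum, map_sum]
  calc (1 : ℝ) ≤ c a := by exact_mod_cast Nat.one_le_iff_ne_zero.mpr (Finsupp.mem_support_iff.mp ha)
    _ = R.heightForm ((c a : ℝ) • a) := (hterm a ha).symm
    _ ≤ ∑ x ∈ c.support, R.heightForm ((c x : ℝ) • x) :=
      Finset.single_le_sum (f := fun x => R.heightForm ((c x : ℝ) • x))
        (fun x hx => by rw [hterm x hx]; positivity) ha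

lemma heightForm_ne_zero {β : V} (hβ : β ∈ R.roots) : R.heightForm β ≠ 0 := by
  rcases R.mem_pos_or_neg_mem_pos β hβ with h | h
  · linarith [one_le_heightForm h]
  · linarith [one_le_heightForm h, R.heightForm.map_neg β]

variable (R)

noncomputable def toRootSet : RootSet V where
  roots := R.roots
  form := R.heightForm
  finite := R.roots.finite_toSet
  zero_notMem := R.zero_not_mem
  rootReflection_mem := R.reflect_mem
  reduced := R.reduced
  crystallographic := R.crystallographic
  form_ne_zero _ := heightForm_ne_zero

lemma toRootSet_pos : R.toRootSet.pos = R.pos := by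
  ext β
  refine ⟨fun ⟨hβ, hf⟩ => ?_, fun h => ⟨R.pos_subset h, show 0 < R.heightForm β by
    linarith [one_le_heightForm h]⟩⟩
  refine (R.mem_pos_or_neg_mem_pos β hβ).resolve_right fun h => ?_
  linarith [one_le_heightForm h, R.heightForm.map_neg β, show 0 < R.heightForm β from hf]

variable {R}

lemma mem_toRootSet_simple {α : V} (hα : α ∈ R.simples) : α ∈ R.toRootSet.simple := by
  have hpos : α ∈ R.toRootSet.pos := R.toRootSet_pos ▸ R.simples_subset hα
  refine ⟨hpos, fun β hβ γ hγ h => ?_⟩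
  rw [toRootSet_pos] at hβ hγ
  have := congrArg R.heightForm h
  rw [map_add, heightForm_simple hα] at this
  linarith [one_le_heightForm hβ, one_le_heightForm hγ]

lemma toRootSet_simple : R.toRootSet.simple = R.simples := by
  ext α
  refine ⟨fun hα => ?_, mem_toRootSet_simple⟩
  by_contra hαs
  obtain ⟨c, hc, hsum⟩ := R.pos_sum_of_simples α ((toRootSet_pos R).subset hα.1)
  have : ⟪α, α⟫ ≤ 0 := by
    nth_rewrite 2 [hsum]
    rw [Finsupp.sum, inner_sum]
    refine Finset.sum_nonpos fun a ha => ?_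
    rw [real_inner_smul_right]
    exact mul_nonpos_of_nonneg_of_nonpos (Nat.cast_nonneg _) <|
      RootSet.inner_nonpos_of_simple hα (mem_toRootSet_simple (hc ha)) fun h => hαs (h ▸ hc ha)
  linarith [real_inner_self_pos.mpr (RootSet.ne_zero hα.1.1)]

lemma weyl_eq_reflectionSubgroup_simples : R.weyl = reflectionSubgroup R.simples := by
  rw [← toRootSet_simple, RootSet.reflectionSubgroup_simple]
  rfl

lemma rootReflection_mem_longRoots {α β : V} (hα : α ∈ R.roots) (hβ : β ∈ longRoots R) :
    rootReflection α β ∈ longRoots R :=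
  ⟨R.reflect_mem α hα β hβ.1, fun γ hγ => by rw [LinearIsometryEquiv.norm_map]; exact hβ.2 γ hγ⟩

variable (R)

noncomputable def longRootSet : RootSet V :=
  R.toRootSet.restrict (longRoots R) (fun _ hβ => hβ.1)
    fun _ hβ _ hγ => rootReflection_mem_longRoots hβ.1 hγ

variable {R}

lemma longRootSet_pos : R.longRootSet.pos = longRoots R ∩ R.toRootSet.pos :=
  RootSet.restrict_pos _ _ _

lemma mapsTo_longRoots_of_mem_weyl {w : V ≃ₗᵢ[ℝ] V} (hw : w ∈ R.weyl) :
    MapsTo w (longRoots R) (longRoots R) :=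
  mapsTo_of_mem_reflectionSubgroup (fun _ hα _ => rootReflection_mem_longRoots hα) hw

lemma mapsTo_longRootSet_pos {w : V ≃ₗᵢ[ℝ] V} (hw : w ∈ reflectionSubgroup (shortSimples R)) :
    MapsTo w R.longRootSet.pos R.longRootSet.pos := by
  refine mapsTo_of_mem_reflectionSubgroup (fun α hα β hβ => ?_) hw
  rw [longRootSet_pos] at hβ ⊢
  refine ⟨rootReflection_mem_longRoots (R.pos_subset (R.simples_subset hα.1)) hβ.1, ?_⟩
  exact RootSet.rootReflection_mem_pos (mem_toRootSet_simple hα.1) hβ.2 fun h => hα.2 (h ▸ hβ.1)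

lemma weyl_le_normalizer_longRoots :
    R.weyl ≤ Subgroup.normalizer (reflectionSubgroup (longRoots R) : Set (V ≃ₗᵢ[ℝ] V)) :=
  fun _ hw => mem_normalizer_reflectionSubgroup (mapsTo_longRoots_of_mem_weyl hw)
    (mapsTo_longRoots_of_mem_weyl (inv_mem hw))

lemma weyl_le_shortSimples_sup_longRoots :
    R.weyl ≤ reflectionSubgroup (shortSimples R) ⊔ reflectionSubgroup (longRoots R) := by
  rw [weyl_eq_reflectionSubgroup_simples]
  refine reflectionSubgroup_le fun α hα => ?_
  by_cases hl : α ∈ longRoots R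
  · exact Subgroup.mem_sup_right (rootReflection_mem_reflectionSubgroup hl)
  · exact Subgroup.mem_sup_left (rootReflection_mem_reflectionSubgroup ⟨hα, hl⟩)

lemma exists_eq_mul_of_mem_weyl {w : V ≃ₗᵢ[ℝ] V} (hw : w ∈ R.weyl) :
    ∃ s ∈ reflectionSubgroup (shortSimples R), ∃ u ∈ reflectionSubgroup (longRoots R),
      w = s * u := by
  have hnorm : reflectionSubgroup (shortSimples R) ≤ _ :=
    (reflectionSubgroup_mono fun _ hα => R.pos_subset (R.simples_subset hα.1)).trans
      weyl_le_normalizer_longRoots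
  have hw' := weyl_le_shortSimples_sup_longRoots hw
  rw [← SetLike.mem_coe, Subgroup.coe_mul_of_left_le_normalizer_right _ _ hnorm] at hw'
  obtain ⟨s, hs, u, hu, rfl⟩ := hw'
  exact ⟨s, hs, u, hu, rfl⟩

lemma shortSimples_inf_longRoots :
    reflectionSubgroup (shortSimples R) ⊓ reflectionSubgroup (longRoots R) = ⊥ :=
  eq_bot_iff.mpr fun _ hw => Subgroup.mem_bot.mpr <|
    R.longRootSet.eq_one_of_mapsTo_pos hw.2 (mapsTo_longRootSet_pos hw.1)

end RootSystemData

theorem statement15_general {V : Type} [NormedAddCommGroup V] [InnerProductSpace ℝ V]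
    (R : RootSystemData V) :
    reflectionSubgroup (longRoots R) ≤ R.weyl ∧
    (∀ w ∈ R.weyl, ∀ u ∈ reflectionSubgroup (longRoots R),
      w * u * w⁻¹ ∈ reflectionSubgroup (longRoots R)) ∧
    reflectionSubgroup (shortSimples R) ⊓ reflectionSubgroup (longRoots R) = ⊥ ∧
    (∀ w ∈ R.weyl, ∃ s ∈ reflectionSubgroup (shortSimples R),
      ∃ u ∈ reflectionSubgroup (longRoots R), w = s * u) :=
  ⟨reflectionSubgroup_mono fun _ hβ => hβ.1,
    fun _ hw _ hu => conj_mem_reflectionSubgroup (mapsTo_longRoots_of_mem_weyl hw) hu,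
    shortSimples_inf_longRoots, fun _ => exists_eq_mul_of_mem_weyl⟩

/-- For an irreducible root system with two root lengths, `W` is the internal
semidirect product `W_s ⋉ W(Δ_l)`: `W(Δ_l) ≤ W` is normal in `W`,
`W_s ∩ W(Δ_l) = {1}` and `W = W_s · W(Δ_l)`. -/
theorem statement15 {V : Type} [NormedAddCommGroup V] [InnerProductSpace ℝ V]
    [FiniteDimensional ℝ V] (R : RootSystemData V)
    (hirr : R.IsIrreducible)
    (htwo : ∃ α ∈ R.roots, ∃ β ∈ R.roots, ‖α‖ ≠ ‖β‖) :
    reflectionSubgroup (longRoots R) ≤ R.weyl ∧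
    (∀ w ∈ R.weyl, ∀ u ∈ reflectionSubgroup (longRoots R),
      w * u * w⁻¹ ∈ reflectionSubgroup (longRoots R)) ∧
    reflectionSubgroup (shortSimples R) ⊓ reflectionSubgroup (longRoots R) = ⊥ ∧
    (∀ w ∈ R.weyl, ∃ s ∈ reflectionSubgroup (shortSimples R),
      ∃ u ∈ reflectionSubgroup (longRoots R), w = s * u) :=
  statement15_general R
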